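/- arXiv:1910.01087 — 3 statements merged into one kernel-verified Lean document; each statement's English description precedes it below -/
import Mathlib

section
/- Let K_N be a Binomial(N,p) random variable with p ∈ (0,1), let 0 < δ < p, and define f₂(x) = log(x)·1_{x ≤ δ}. Then |E[f₂(max(K_N,1)/N)]| ≤ (p(1-p)/(N(p-δ)²))·(log N + |log δ|), and hence E[f₂(max(K_N,1)/N)] → 0 as N → ∞. -/
open MeasureTheory Filter Real

/-- For `K_N ~ Binomial(N,p)`, `0 < δ < p`, and
`f₂(x) = log(x)·1_{x ≤ δ}`, we have
`|E[f₂(max(K_N,1)/N)]| ≤ (p(1-p)/(N(p-δ)²))·(log N + |log δ|)` and hence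
`E[f₂(max(K_N,1)/N)] → 0`. -/
theorem stmt2
    {Ω : Type*} [MeasureSpace Ω] [IsProbabilityMeasure (volume : Measure Ω)]
    (K : ℕ → Ω → ℕ) (hmeas : ∀ N, Measurable (K N))
    (p δ : ℝ) (hp : 0 < p) (hp1 : p < 1) (hδ : 0 < δ) (hδp : δ < p)
    (hbin : ∀ N, ∀ k : ℕ, volume {ω | K N ω = k} =
      ENNReal.ofReal ((N.choose k : ℝ) * p ^ k * (1 - p) ^ (N - k)))
    (hle : ∀ N ω, K N ω ≤ N) :
    (∀ N : ℕ, 0 < N →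
      |∫ ω, (if ((max (K N ω) 1 : ℕ) : ℝ) / N ≤ δ then
              Real.log (((max (K N ω) 1 : ℕ) : ℝ) / N) else 0)| ≤
        (p * (1 - p) / (N * (p - δ) ^ 2)) * (Real.log N + |Real.log δ|)) ∧
    Tendsto (fun N : ℕ => ∫ ω, (if ((max (K N ω) 1 : ℕ) : ℝ) / N ≤ δ then
              Real.log (((max (K N ω) 1 : ℕ) : ℝ) / N) else 0)) atTop (nhds 0) := by
  have hq : (0:ℝ) ≤ 1 - p := by linarith
  have hpδ : (0:ℝ) < p - δ := by linarith
  -- the main bound (with just `log N`)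
  have main : ∀ N : ℕ, 0 < N →
      |∫ ω, (if ((max (K N ω) 1 : ℕ) : ℝ) / N ≤ δ then
              Real.log (((max (K N ω) 1 : ℕ) : ℝ) / N) else 0)| ≤
        (p * (1 - p) / ((p - δ) ^ 2)) * (Real.log N / N) := by
    intro N hN
    have hN0 : (0:ℝ) < N := by exact_mod_cast hN
    set g : ℕ → ℝ := fun k =>
      if ((max k 1 : ℕ) : ℝ) / N ≤ δ then Real.log (((max k 1 : ℕ) : ℝ) / N) else 0 with hg
    set b : ℕ → ℝ := fun k => (N.choose k : ℝ) * p ^ k * (1 - p) ^ (N - k) with hb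
    have hbnn : ∀ k, 0 ≤ b k := by
      intro k; simp only [hb]; positivity
    have hsets : ∀ k : ℕ, MeasurableSet {ω | K N ω = k} := fun k =>
      (hmeas N) (measurableSet_singleton k)
    -- rewrite the integral as a finite sum
    have hfun : ∀ ω : Ω, (if ((max (K N ω) 1 : ℕ) : ℝ) / N ≤ δ then
              Real.log (((max (K N ω) 1 : ℕ) : ℝ) / N) else 0) =
        ∑ k ∈ Finset.range (N+1), Set.indicator {ω | K N ω = k} (fun _ => g k) ω := by
      intro ω
      rw [Finset.sum_eq_single (K N ω)]
      · simp [Set.indicator, hg]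
      · intro k _ hk
        exact Set.indicator_of_notMem (fun h => hk (Eq.symm h)) _
      · intro h
        exact absurd (Finset.mem_range.2 (Nat.lt_succ_of_le (hle N ω))) h
    have hint : (∫ ω, (if ((max (K N ω) 1 : ℕ) : ℝ) / N ≤ δ then
              Real.log (((max (K N ω) 1 : ℕ) : ℝ) / N) else 0)) =
        ∑ k ∈ Finset.range (N+1), g k * b k := by
      simp_rw [hfun]
      rw [MeasureTheory.integral_finset_sum]
      · refine Finset.sum_congr rfl fun k _ => ?_
        rw [MeasureTheory.integral_indicator_const (g k) (hsets k), measureReal_def, hbin N k,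
          ENNReal.toReal_ofReal (hbnn k), smul_eq_mul, mul_comm]
      · intro k _
        exact (MeasureTheory.integrable_const (g k)).indicator (hsets k)
    rw [hint]
    have hlogN : 0 ≤ Real.log N := Real.log_nonneg (by exact_mod_cast hN)
    -- termwise Chebyshev-style bound
    have hterm : ∀ k ∈ Finset.range (N+1),
        |g k * b k| ≤ (Real.log N / (p - δ)^2) * ((p - (k:ℝ)/N)^2 * b k) := by
      intro k _
      rw [abs_mul, abs_of_nonneg (hbnn k)]
      by_cases hc : ((max k 1 : ℕ) : ℝ) / N ≤ δ
      · have hx1 : (1:ℝ) ≤ ((max k 1 : ℕ) : ℝ) := by exact_mod_cast Nat.le_max_right k 1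
        have hxpos : (0:ℝ) < ((max k 1 : ℕ) : ℝ) / N := by positivity
        have hgle : |g k| ≤ Real.log N := by
          simp only [hg, hc, if_true]
          have hle1 : ((max k 1 : ℕ) : ℝ) / N ≤ 1 := by
            apply le_trans hc; linarith
          rw [abs_of_nonpos (Real.log_nonpos hxpos.le hle1)]
          have : Real.log (1/N) ≤ Real.log (((max k 1 : ℕ) : ℝ) / N) :=
            Real.log_le_log (by positivity) (by gcongr)
          rw [Real.log_div one_ne_zero (ne_of_gt hN0), Real.log_one] at this
          linarith
        have hk2 : (p - δ)^2 ≤ (p - (k:ℝ)/N)^2 := by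
          have hkx : (k:ℝ)/N ≤ δ := by
            refine le_trans ?_ hc
            gcongr
            exact_mod_cast Nat.le_max_left k 1
          have : p - δ ≤ p - (k:ℝ)/N := by linarith
          exact pow_le_pow_left₀ hpδ.le this 2
        calc |g k| * b k ≤ Real.log N * b k :=
              mul_le_mul_of_nonneg_right hgle (hbnn k)
          _ = (Real.log N / (p - δ)^2) * ((p - δ)^2 * b k) := by
              have h2 : ((p - δ)^2 : ℝ) ≠ 0 := by positivity
              field_simp
          _ ≤ (Real.log N / (p - δ)^2) * ((p - (k:ℝ)/N)^2 * b k) := by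
              apply mul_le_mul_of_nonneg_left _ (by positivity)
              exact mul_le_mul_of_nonneg_right hk2 (hbnn k)
      · simp only [hg, hc, if_false, abs_zero, zero_mul]
        positivity
    -- the variance identity (Bernstein polynomials)
    have hvar : ∑ k ∈ Finset.range (N+1), (p - (k:ℝ)/N)^2 * b k = p * (1 - p) / N := by
      have hpI : p ∈ Set.Icc (0:ℝ) 1 := ⟨hp.le, hp1.le⟩
      have := bernstein.variance (n := N) hN.ne' ⟨p, hpI⟩
      rw [← this, Finset.sum_range]
      refine Finset.sum_congr rfl fun k _ => ?_
      rw [bernstein_apply]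
      rfl
    calc |∑ k ∈ Finset.range (N+1), g k * b k|
        ≤ ∑ k ∈ Finset.range (N+1), |g k * b k| := Finset.abs_sum_le_sum_abs _ _
      _ ≤ ∑ k ∈ Finset.range (N+1),
            (Real.log N / (p - δ)^2) * ((p - (k:ℝ)/N)^2 * b k) :=
          Finset.sum_le_sum hterm
      _ = (Real.log N / (p - δ)^2) * ∑ k ∈ Finset.range (N+1),
            (p - (k:ℝ)/N)^2 * b k := by rw [Finset.mul_sum]
      _ = (Real.log N / (p - δ)^2) * (p * (1 - p) / N) := by rw [hvar]
      _ = (p * (1 - p) / ((p - δ) ^ 2)) * (Real.log N / N) := by ring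
  constructor
  · intro N hN
    refine (main N hN).trans ?_
    have hN0 : (0:ℝ) < N := by exact_mod_cast hN
    have h1 : (p * (1 - p) / ((p - δ) ^ 2)) * (Real.log N / N)
        = (p * (1 - p) / (N * (p - δ) ^ 2)) * Real.log N := by
      have h2 : ((p - δ)^2 : ℝ) ≠ 0 := by positivity
      have h3 : (N:ℝ) ≠ 0 := ne_of_gt hN0
      field_simp
    rw [h1]
    apply mul_le_mul_of_nonneg_left (le_add_of_nonneg_right (abs_nonneg _))
    positivity
  · rw [tendsto_zero_iff_abs_tendsto_zero]
    apply squeeze_zero' (Eventually.of_forall fun _ => abs_nonneg _)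
    · filter_upwards [eventually_gt_atTop 0] with N hN using main N hN
    · have hlog : Tendsto (fun x : ℝ => Real.log x / x) atTop (nhds 0) := by
        have := Real.tendsto_pow_log_div_mul_add_atTop 1 0 1 one_ne_zero
        simpa using this
      have : Tendsto (fun N : ℕ => Real.log N / N) atTop (nhds 0) :=
        hlog.comp tendsto_natCast_atTop_atTop
      have h2 := this.const_mul (p * (1 - p) / ((p - δ) ^ 2))
      rw [mul_zero] at h2
      exact h2
end

section
/- Fix a finite set J, positive reference probabilities R : J → ℝ>0 summing to 1, L teams with an invertible matrix A ∈ ℝ^{L×L} with entries a_{lm}, and costs φ_l : J → ℝ for each team l. Define M_l(j) via the vector equation M(j) = A⁻¹·(-diag(A) - φ(j)) componentwise (i.e., M_l(j) = ∑_m (A⁻¹)_{lm}(-a_{mm} - φ_m(j))), and Q*_l(j) = R_j·exp(M_l(j)) / (∑_k R_k·exp(M_l(k))). Then for each l, Q*_l ∈ Δ(J), Q*_l(j) > 0 for all j, and the stationarity condition φ_l(j) + ∑_m a_{lm}·log(Q*_m(j)/R_j) = -a_{ll} - λ_l holds for all j, where λ_l = ∑_m a_{lm}·log(∑_k R_k·exp(M_m(k))).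 -/
open Finset Real Matrix

/-- Multi-team stationarity: with `M(j) = A⁻¹(-diag A - φ(j))` and
`Q*ₗ(j) = Rⱼ exp(Mₗ(j)) / ∑ₖ Rₖ exp(Mₗ(k))`, each `Q*ₗ` is a strictly positive
probability vector and satisfies
`φₗ(j) + ∑ₘ aₗₘ log(Q*ₘ(j)/Rⱼ) = -aₗₗ - λₗ` with
`λₗ = ∑ₘ aₗₘ log(∑ₖ Rₖ exp(Mₘ(k)))`. -/
theorem stmt6
    {J : Type*} [Fintype J] {L : ℕ}
    (R : J → ℝ) (hRpos : ∀ j, 0 < R j) (hRsum : ∑ j, R j = 1)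
    (A : Matrix (Fin L) (Fin L) ℝ) (hA : IsUnit A.det)
    (φ : Fin L → J → ℝ)
    (M : Fin L → J → ℝ)
    (hM : ∀ l j, M l j = ∑ m, A⁻¹ l m * (-(A m m) - φ m j))
    (Qstar : Fin L → J → ℝ)
    (hQ : ∀ l j, Qstar l j =
      R j * Real.exp (M l j) / ∑ k, R k * Real.exp (M l k))
    (lam : Fin L → ℝ)
    (hlam : ∀ l, lam l = ∑ m, A l m * Real.log (∑ k, R k * Real.exp (M m k))) :
    ∀ l : Fin L,
      (∀ j, 0 < Qstar l j) ∧
      (∑ j, Qstar l j = 1) ∧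
      (∀ j, φ l j + ∑ m, A l m * Real.log (Qstar m j / R j) = -(A l l) - lam l) := by
  have hJ : Nonempty J := by
    by_contra h
    rw [not_nonempty_iff] at h
    simp [Finset.univ_eq_empty] at hRsum
  have hZ : ∀ l, 0 < ∑ k, R k * Real.exp (M l k) :=
    fun l => Finset.sum_pos (fun k _ => mul_pos (hRpos k) (Real.exp_pos _))
      (Finset.univ_nonempty)
  -- A * M = -diag A - φ componentwise
  have hAM : ∀ l j, ∑ m, A l m * M m j = -(A l l) - φ l j := by
    intro l j
    have hinv : A * A⁻¹ = 1 := mul_nonsing_inv A hA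
    calc ∑ m, A l m * M m j
        = ∑ m, A l m * ∑ n, A⁻¹ m n * (-(A n n) - φ n j) := by
          simp only [hM]
      _ = ∑ n, (∑ m, A l m * A⁻¹ m n) * (-(A n n) - φ n j) := by
          simp_rw [Finset.mul_sum, Finset.sum_mul, mul_assoc]
          rw [Finset.sum_comm]
      _ = ∑ n, (1 : Matrix (Fin L) (Fin L) ℝ) l n * (-(A n n) - φ n j) := by
          refine Finset.sum_congr rfl fun n _ => ?_
          congr 1
          have := congrFun (congrFun hinv l) n
          simpa [Matrix.mul_apply] using this
      _ = -(A l l) - φ l j := by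
          simp [Matrix.one_apply, Finset.sum_ite_eq']
  intro l
  refine ⟨fun j => ?_, ?_, fun j => ?_⟩
  · rw [hQ]
    exact div_pos (mul_pos (hRpos j) (Real.exp_pos _)) (hZ l)
  · simp only [hQ]
    rw [← Finset.sum_div, div_self (hZ l).ne']
  · have hlog : ∀ m, Real.log (Qstar m j / R j)
        = M m j - Real.log (∑ k, R k * Real.exp (M m k)) := by
      intro m
      have h1 : Qstar m j / R j
          = Real.exp (M m j) / ∑ k, R k * Real.exp (M m k) := by
        rw [hQ]
        field_simp
        rw [mul_comm (R j)]
        rw [div_mul_cancel_right₀ (hRpos j).ne', one_div]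
      rw [h1, Real.log_div (Real.exp_pos _).ne' (hZ m).ne', Real.log_exp]
    simp only [hlog, mul_sub, Finset.sum_sub_distrib]
    rw [hAM l j, hlam l]
    ring
end

section
/- Under the assumptions of Lemma 1 — drivers in team m ≠ l are i.i.d. with P(at node i) = p > 0 and conditional action probability q > 0, with K^{ij} and K^i the counts of team-m drivers at i choosing j and at i respectively — we have lim_{N_m→∞} ( E[log(K^{ij}/N_m)] - E[log(K^i/N_m)] ) = log q, where by convention log terms are evaluated as log of max(count,1)/N_m. -/
open MeasureTheory Filter Real Finset

namespace Stmt15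

noncomputable def b (r : ℝ) (N k : ℕ) : ℝ := (N.choose k : ℝ) * r ^ k * (1 - r) ^ (N - k)

lemma b_nonneg {r : ℝ} (h0 : 0 ≤ r) (h1 : r ≤ 1) (N k : ℕ) : 0 ≤ b r N k := by
  have h2 : (0:ℝ) ≤ 1 - r := by linarith
  unfold b; positivity

lemma sum_b (r : ℝ) (N : ℕ) : ∑ k ∈ range (N + 1), b r N k = 1 := by
  calc ∑ k ∈ range (N + 1), b r N k
      = ∑ k ∈ range (N + 1), r ^ k * (1 - r) ^ (N - k) * (N.choose k : ℝ) := by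
        apply Finset.sum_congr rfl; intros; unfold b; ring
    _ = (r + (1 - r)) ^ N := (add_pow r (1 - r) N).symm
    _ = 1 := by rw [show r + (1 - r) = (1:ℝ) by ring, one_pow]

lemma sum_mul_b (r : ℝ) (N : ℕ) :
    ∑ k ∈ range (N + 1), (k : ℝ) * b r N k = N * r := by
  induction N with
  | zero => simp [b]
  | succ N _ =>
    rw [Finset.sum_range_succ']
    simp only [Nat.cast_zero, zero_mul, add_zero]
    have hterm : ∀ k, ((k + 1 : ℕ) : ℝ) * b r (N + 1) (k + 1) = (N + 1) * r * b r N k := by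
      intro k
      have hc' : ((N : ℝ) + 1) * N.choose k = (N + 1).choose (k + 1) * (k + 1) := by
        exact_mod_cast Nat.add_one_mul_choose_eq N k
      unfold b
      push_cast
      linear_combination (-(r ^ (k + 1)) * (1 - r) ^ (N - k)) * hc'
    calc ∑ k ∈ range (N + 1), ((k + 1 : ℕ) : ℝ) * b r (N + 1) (k + 1)
        = ∑ k ∈ range (N + 1), (N + 1) * r * b r N k := by
          apply Finset.sum_congr rfl; intro k _; exact hterm k
      _ = (N + 1) * r * ∑ k ∈ range (N + 1), b r N k := by rw [Finset.mul_sum]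
      _ = ((N:ℝ) + 1) * r := by rw [sum_b]; ring
      _ = ((N + 1 : ℕ) : ℝ) * r := by push_cast; ring

lemma sum_sq_mul_b (r : ℝ) (N : ℕ) :
    ∑ k ∈ range (N + 1), (k : ℝ) * ((k:ℝ) - 1) * b r N k = N * ((N:ℝ) - 1) * r ^ 2 := by
  induction N with
  | zero => simp [b]
  | succ N _ =>
    rw [Finset.sum_range_succ']
    simp only [Nat.cast_zero, zero_mul, add_zero, zero_sub, mul_zero]
    have hterm : ∀ k, ((k + 1 : ℕ) : ℝ) * (((k + 1 : ℕ) : ℝ) - 1) * b r (N + 1) (k + 1)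
        = (N + 1) * r * ((k : ℝ) * b r N k) := by
      intro k
      have hc' : ((N : ℝ) + 1) * N.choose k = (N + 1).choose (k + 1) * (k + 1) := by
        exact_mod_cast Nat.add_one_mul_choose_eq N k
      unfold b
      push_cast
      linear_combination (-((k : ℝ) * r ^ (k + 1) * (1 - r) ^ (N - k))) * hc'
    calc ∑ k ∈ range (N + 1), ((k + 1 : ℕ) : ℝ) * (((k + 1 : ℕ) : ℝ) - 1) * b r (N + 1) (k + 1)
        = ∑ k ∈ range (N + 1), (N + 1) * r * ((k : ℝ) * b r N k) := by
          apply Finset.sum_congr rfl; intro k _; exact hterm k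
      _ = (N + 1) * r * ∑ k ∈ range (N + 1), (k : ℝ) * b r N k := by rw [Finset.mul_sum]
      _ = (N + 1) * r * (N * r) := by rw [sum_mul_b]
      _ = ((N + 1 : ℕ) : ℝ) * (((N + 1 : ℕ) : ℝ) - 1) * r ^ 2 := by push_cast; ring

lemma sum_dev_sq (r : ℝ) (N : ℕ) :
    ∑ k ∈ range (N + 1), ((k : ℝ) - N * r) ^ 2 * b r N k = N * r * (1 - r) := by
  have h0 := sum_b r N
  have h1 := sum_mul_b r N
  have h2 := sum_sq_mul_b r N
  have key : ∀ k : ℕ, ((k : ℝ) - N * r) ^ 2 * b r N k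
      = (k : ℝ) * ((k:ℝ) - 1) * b r N k + (1 - 2 * N * r) * ((k : ℝ) * b r N k)
        + (N * r) ^ 2 * b r N k := by intro k; ring
  rw [Finset.sum_congr rfl fun k _ => key k]
  rw [Finset.sum_add_distrib, Finset.sum_add_distrib, ← Finset.mul_sum, ← Finset.mul_sum]
  rw [h0, h1, h2]
  ring






lemma per_upper {r : ℝ} {N k : ℕ} (hN : 1 ≤ N) (hr : 0 < r) :
    Real.log (((max k 1 : ℕ) : ℝ) / N) ≤ (Real.log r - 1) + ((k : ℝ) + 1) / (N * r) := by
  have hNpos : (0 : ℝ) < N := by exact_mod_cast hN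
  set x : ℝ := ((max k 1 : ℕ) : ℝ) / N with hx
  have hx0 : 0 < x := by
    apply div_pos _ hNpos
    exact_mod_cast lt_of_lt_of_le one_pos (le_max_right k 1)
  have h1 : Real.log (x / r) ≤ x / r - 1 := Real.log_le_sub_one_of_pos (div_pos hx0 hr)
  rw [Real.log_div (ne_of_gt hx0) (ne_of_gt hr)] at h1
  have hm : ((max k 1 : ℕ) : ℝ) ≤ (k : ℝ) + 1 := by
    exact_mod_cast (max_le (Nat.le_succ k) (by omega) : max k 1 ≤ k + 1)
  have h2 : x ≤ ((k : ℝ) + 1) / N := by rw [hx]; gcongr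
  have h3 : x / r ≤ ((k : ℝ) + 1) / (N * r) := by
    rw [show ((k : ℝ) + 1) / (N * r) = (((k : ℝ) + 1) / N) / r by rw [div_div]]
    gcongr
  linarith

lemma per_lower {r : ℝ} {N k : ℕ} (hN : 1 ≤ N) (hr : 0 < r) :
    Real.log r + ((k : ℝ) / N - r) / r - 2 * ((k : ℝ) / N - r) ^ 2 / r ^ 2
      - (Real.log N + |Real.log r| + 1) * (if (k : ℝ) < r * N / 2 then (1 : ℝ) else 0)
    ≤ Real.log (((max k 1 : ℕ) : ℝ) / N) := by
  have hNpos : (0 : ℝ) < N := by exact_mod_cast hN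
  by_cases hb : (k : ℝ) < r * N / 2
  · rw [if_pos hb]
    have h1 : Real.log (1 / N) ≤ Real.log (((max k 1 : ℕ) : ℝ) / N) := by
      apply Real.log_le_log (by positivity)
      gcongr
      exact_mod_cast le_max_right k 1
    rw [one_div, Real.log_inv] at h1
    have h2 : Real.log r ≤ |Real.log r| := le_abs_self _
    have h3 : ((k : ℝ) / N - r) / r ≤ 0 := by
      apply div_nonpos_of_nonpos_of_nonneg _ hr.le
      have : (k : ℝ) / N < r / 2 := by
        rw [div_lt_div_iff₀ hNpos two_pos] at *
        nlinarith
      nlinarith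
    have h4 : 0 ≤ 2 * ((k : ℝ) / N - r) ^ 2 / r ^ 2 := by positivity
    linarith
  · rw [if_neg hb, mul_zero, sub_zero]
    push_neg at hb
    have hk1 : 1 ≤ k := by
      by_contra h
      have : k = 0 := by omega
      rw [this] at hb
      simp at hb
      nlinarith
    have hmax : max k 1 = k := max_eq_left hk1
    rw [hmax]
    set x : ℝ := (k : ℝ) / N with hxdef
    have hx2 : r / 2 ≤ x := by
      rw [hxdef, le_div_iff₀ hNpos]
      nlinarith
    have hx0 : 0 < x := lt_of_lt_of_le (by positivity) hx2
    have hlog : 1 - r / x ≤ Real.log x - Real.log r := by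
      have h := Real.log_le_sub_one_of_pos (div_pos hr hx0)
      rw [Real.log_div (ne_of_gt hr) (ne_of_gt hx0)] at h
      linarith
    have hkey : (1 - r / x) - ((x - r) / r - 2 * (x - r) ^ 2 / r ^ 2)
        = (x - r) ^ 2 * (2 * x - r) / (x * r ^ 2) := by
      field_simp
      ring
    have hpos : 0 ≤ (x - r) ^ 2 * (2 * x - r) / (x * r ^ 2) := by
      apply div_nonneg _ (by positivity)
      apply mul_nonneg (sq_nonneg _)
      linarith
    linarith [hkey ▸ hpos]

lemma tendsto_sum_log {r : ℝ} (hr : 0 < r) (hr1 : r ≤ 1) :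
    Tendsto (fun N : ℕ => ∑ k ∈ range (N + 1),
        Real.log (((max k 1 : ℕ) : ℝ) / N) * b r N k) atTop (nhds (Real.log r)) := by
  set S : ℕ → ℝ := fun N => ∑ k ∈ range (N + 1),
      Real.log (((max k 1 : ℕ) : ℝ) / N) * b r N k with hS
  -- upper bound
  have hup : ∀ N : ℕ, 1 ≤ N → S N ≤ Real.log r + (1 / r) * ((N : ℝ))⁻¹ := by
    intro N hN
    have hNpos : (0 : ℝ) < N := by exact_mod_cast hN
    have h1 : S N ≤ ∑ k ∈ range (N + 1),
        ((Real.log r - 1) * b r N k + (1 / (N * r)) * ((k : ℝ) * b r N k)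
          + (1 / (N * r)) * b r N k) := by
      apply Finset.sum_le_sum
      intro k _
      have hb := b_nonneg hr.le hr1 N k
      have hper := per_upper (k := k) hN hr
      have hmul := mul_le_mul_of_nonneg_right hper hb
      have heq : ((Real.log r - 1) + ((k : ℝ) + 1) / (N * r)) * b r N k
          = (Real.log r - 1) * b r N k + (1 / (N * r)) * ((k : ℝ) * b r N k)
            + (1 / (N * r)) * b r N k := by ring
      linarith [heq ▸ hmul]
    rw [Finset.sum_add_distrib, Finset.sum_add_distrib, ← Finset.mul_sum, ← Finset.mul_sum,
      ← Finset.mul_sum, sum_b, sum_mul_b] at h1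
    have : (Real.log r - 1) * 1 + 1 / (N * r) * (N * r) + 1 / (N * r) * 1
        = Real.log r + (1 / r) * ((N : ℝ))⁻¹ := by
      field_simp
      ring
    linarith [this ▸ h1]
  -- lower bound
  have hlow : ∀ N : ℕ, 1 ≤ N →
      Real.log r - (2 / r) * ((N : ℝ))⁻¹
        - (Real.log N + |Real.log r| + 1) * ((4 / r) * ((N : ℝ))⁻¹) ≤ S N := by
    intro N hN
    have hNpos : (0 : ℝ) < N := by exact_mod_cast hN
    set c : ℝ := Real.log N + |Real.log r| + 1 with hc
    have hc0 : 0 ≤ c := by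
      have : 0 ≤ Real.log N := Real.log_nonneg (by exact_mod_cast hN)
      positivity
    set g : ℕ → ℝ := fun k => if (k : ℝ) < r * N / 2 then (1 : ℝ) else 0 with hg
    -- main part
    have h1 : ∑ k ∈ range (N + 1),
        (((Real.log r - 1) * b r N k + (1 / (N * r)) * ((k : ℝ) * b r N k)
          - (2 / (r ^ 2 * N ^ 2)) * (((k : ℝ) - N * r) ^ 2 * b r N k))
          - c * (g k * b r N k)) ≤ S N := by
      apply Finset.sum_le_sum
      intro k _
      have hb := b_nonneg hr.le hr1 N k
      have hper := per_lower (k := k) hN hr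
      have hmul := mul_le_mul_of_nonneg_right hper hb
      have heq : (Real.log r + ((k : ℝ) / N - r) / r - 2 * ((k : ℝ) / N - r) ^ 2 / r ^ 2
          - c * (g k)) * b r N k
          = ((Real.log r - 1) * b r N k + (1 / (N * r)) * ((k : ℝ) * b r N k)
          - (2 / (r ^ 2 * N ^ 2)) * (((k : ℝ) - N * r) ^ 2 * b r N k))
          - c * (g k * b r N k) := by
        field_simp
        ring
      linarith [heq ▸ hmul]
    -- bad-set probability bound
    have h2 : ∑ k ∈ range (N + 1), g k * b r N k
        ≤ ∑ k ∈ range (N + 1), (4 / (r ^ 2 * N ^ 2)) * (((k : ℝ) - N * r) ^ 2 * b r N k) := by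
      apply Finset.sum_le_sum
      intro k _
      have hb := b_nonneg hr.le hr1 N k
      by_cases hbad : (k : ℝ) < r * N / 2
      · rw [hg]; simp only [if_pos hbad]
        have hsq : (r * N / 2) ^ 2 ≤ ((k : ℝ) - N * r) ^ 2 := by
          have h0k : (0 : ℝ) ≤ k := Nat.cast_nonneg k
          nlinarith
        have h4 : (1 : ℝ) ≤ 4 / (r ^ 2 * N ^ 2) * ((k : ℝ) - N * r) ^ 2 := by
          rw [div_mul_eq_mul_div, le_div_iff₀ (by positivity)]
          nlinarith
        nlinarith
      · rw [hg]; simp only [if_neg hbad]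
        have : (0:ℝ) ≤ 4 / (r ^ 2 * N ^ 2) * (((k : ℝ) - N * r) ^ 2 * b r N k) := by positivity
        linarith
    rw [← Finset.mul_sum, sum_dev_sq] at h2
    -- combine
    have hsplit : ∑ k ∈ range (N + 1),
        (((Real.log r - 1) * b r N k + (1 / (N * r)) * ((k : ℝ) * b r N k)
          - (2 / (r ^ 2 * N ^ 2)) * (((k : ℝ) - N * r) ^ 2 * b r N k))
          - c * (g k * b r N k))
        = ((Real.log r - 1) * 1 + (1 / (N * r)) * (N * r)
          - (2 / (r ^ 2 * N ^ 2)) * (N * r * (1 - r)))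
          - c * ∑ k ∈ range (N + 1), g k * b r N k := by
      rw [Finset.sum_sub_distrib, Finset.sum_sub_distrib, Finset.sum_add_distrib,
        ← Finset.mul_sum, ← Finset.mul_sum, ← Finset.mul_sum, ← Finset.mul_sum,
        sum_b, sum_mul_b, sum_dev_sq]
    rw [hsplit] at h1
    have hmain : Real.log r - (2 / r) * ((N : ℝ))⁻¹
        ≤ (Real.log r - 1) * 1 + (1 / (N * r)) * (N * r)
          - (2 / (r ^ 2 * N ^ 2)) * (N * r * (1 - r)) := by
      have e1 : (1 / ((N:ℝ) * r)) * ((N:ℝ) * r) = 1 := by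
        field_simp
      rw [e1]
      have e2 : (2 / (r ^ 2 * (N:ℝ) ^ 2)) * ((N:ℝ) * r * (1 - r)) = (2 * (1 - r) / r) * ((N:ℝ))⁻¹ := by
        field_simp
      rw [e2]
      have : (2 * (1 - r) / r) * ((N:ℝ))⁻¹ ≤ (2 / r) * ((N:ℝ))⁻¹ := by
        apply mul_le_mul_of_nonneg_right _ (by positivity)
        gcongr
        linarith
      linarith
    have hbadmul : c * ∑ k ∈ range (N + 1), g k * b r N k
        ≤ c * ((4 / r) * ((N : ℝ))⁻¹) := by
      apply mul_le_mul_of_nonneg_left _ hc0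
      have e3 : 4 / (r ^ 2 * (N:ℝ) ^ 2) * ((N:ℝ) * r * (1 - r)) ≤ (4 / r) * ((N : ℝ))⁻¹ := by
        have : 4 / (r ^ 2 * (N:ℝ) ^ 2) * ((N:ℝ) * r * (1 - r)) = (4 * (1 - r) / r) * ((N:ℝ))⁻¹ := by
          field_simp
        rw [this]
        apply mul_le_mul_of_nonneg_right _ (by positivity)
        gcongr
        linarith
      linarith
    linarith
  -- squeeze
  have h0 : Tendsto (fun N : ℕ => ((N : ℝ))⁻¹) atTop (nhds 0) :=
    tendsto_inv_atTop_nhds_zero_nat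
  have h1 : Tendsto (fun N : ℕ => Real.log N * ((N : ℝ))⁻¹) atTop (nhds 0) := by
    have h2 := Real.isLittleO_log_id_atTop.tendsto_div_nhds_zero.comp
      (tendsto_natCast_atTop_atTop (R := ℝ))
    simpa [Function.comp_def, div_eq_mul_inv] using h2
  have hlo : Tendsto (fun N : ℕ => Real.log r - (2 / r) * ((N : ℝ))⁻¹
      - (Real.log N + |Real.log r| + 1) * ((4 / r) * ((N : ℝ))⁻¹)) atTop (nhds (Real.log r)) := by
    have hmain : Tendsto (fun N : ℕ => Real.log r - (2 / r) * ((N : ℝ))⁻¹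
        - ((4 / r) * (Real.log N * ((N : ℝ))⁻¹)
          + (|Real.log r| + 1) * ((4 / r) * ((N : ℝ))⁻¹))) atTop
        (nhds (Real.log r - (2 / r) * 0 - ((4 / r) * 0 + (|Real.log r| + 1) * ((4 / r) * 0)))) :=
      (tendsto_const_nhds.sub (h0.const_mul _)).sub
        ((h1.const_mul _).add ((h0.const_mul _).const_mul _))
    simp only [mul_zero, sub_zero, add_zero] at hmain
    exact hmain.congr (fun N => by ring)
  have hhi : Tendsto (fun N : ℕ => Real.log r + (1 / r) * ((N : ℝ))⁻¹) atTop
      (nhds (Real.log r)) := by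
    have := tendsto_const_nhds (x := Real.log r) (f := atTop (α := ℕ)) |>.add (h0.const_mul (1 / r))
    simpa using this
  apply tendsto_of_tendsto_of_tendsto_of_le_of_le' hlo hhi
  · filter_upwards [eventually_ge_atTop 1] with N hN
    exact hlow N hN
  · filter_upwards [eventually_ge_atTop 1] with N hN
    exact hup N hN

section Integral
variable {Ω : Type*} [MeasureSpace Ω] [IsProbabilityMeasure (volume : Measure Ω)]

lemma integral_comp_nat_bdd (K : Ω → ℕ) (N : ℕ) (hK : ∀ ω, K ω ≤ N)
    (hmeas : Measurable K) (f : ℕ → ℝ) :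
    ∫ ω, f (K ω) = ∑ k ∈ range (N + 1), f k * (volume {ω | K ω = k}).toReal := by
  have hset : ∀ k : ℕ, MeasurableSet {ω | K ω = k} := fun k =>
    hmeas (measurableSet_singleton k)
  have hrep : ∀ ω, f (K ω)
      = ∑ k ∈ range (N + 1), Set.indicator {ω | K ω = k} (fun _ => f k) ω := by
    intro ω
    rw [Finset.sum_eq_single_of_mem (K ω) (Finset.mem_range.2 (Nat.lt_succ_of_le (hK ω)))]
    · simp [Set.indicator_of_mem, Set.mem_setOf_eq]
    · intro k _ hk
      exact Set.indicator_of_notMem (by simp [Set.mem_setOf_eq]; omega) _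
  calc ∫ ω, f (K ω)
      = ∫ ω, ∑ k ∈ range (N + 1), Set.indicator {ω | K ω = k} (fun _ => f k) ω := by
        exact integral_congr_ae (Filter.Eventually.of_forall hrep)
    _ = ∑ k ∈ range (N + 1), ∫ ω, Set.indicator {ω | K ω = k} (fun _ => f k) ω := by
        apply integral_finset_sum
        intro k _
        exact (integrable_indicator_iff (hset k)).2 (integrableOn_const (measure_lt_top _ _).ne enorm_ne_top)
    _ = ∑ k ∈ range (N + 1), f k * (volume {ω | K ω = k}).toReal := by
        apply Finset.sum_congr rfl
        intro k _
        rw [integral_indicator_const (f k) (hset k)]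
        simp [mul_comm, measureReal_def]

lemma tendsto_integral_log {Ω : Type*} [MeasureSpace Ω]
    [IsProbabilityMeasure (volume : Measure Ω)]
    {r : ℝ} (hr : 0 < r) (hr1 : r ≤ 1) (K : ℕ → Ω → ℕ)
    (hm : ∀ N, Measurable (K N))
    (hb : ∀ N k, volume {ω | K N ω = k} = ENNReal.ofReal (b r N k))
    (hle : ∀ N ω, K N ω ≤ N) :
    Tendsto (fun N : ℕ => ∫ ω, Real.log (((max (K N ω) 1 : ℕ) : ℝ) / N)) atTop
      (nhds (Real.log r)) := by
  apply (tendsto_sum_log hr hr1).congr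
  intro N
  rw [integral_comp_nat_bdd (K N) N (hle N) (hm N)
    (fun k => Real.log (((max k 1 : ℕ) : ℝ) / N))]
  apply Finset.sum_congr rfl
  intro k _
  rw [hb N k, ENNReal.toReal_ofReal (b_nonneg hr.le hr1 N k)]

end Integral

end Stmt15

open Stmt15 in
/-- Mean-field limit of the log-population tax (Lemma 1): with
`K^i_N ~ Binomial(N, p)` and `K^{ij}_N ~ Binomial(N, pq)` (the team-m counts at
node `i` and at `i` choosing `j`), and `K^{ij}_N ≤ K^i_N ≤ N`,
`E[log(K^{ij}_N/N)] - E[log(K^i_N/N)] → log q`, where logs are evaluated at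
`max(count,1)/N`. -/
theorem stmt15
    {Ω : Type*} [MeasureSpace Ω] [IsProbabilityMeasure (volume : Measure Ω)]
    (p q : ℝ) (hp : 0 < p) (hp1 : p ≤ 1) (hq : 0 < q) (hq1 : q ≤ 1)
    (Kij Ki : ℕ → Ω → ℕ)
    (hmeasij : ∀ N, Measurable (Kij N)) (hmeasi : ∀ N, Measurable (Ki N))
    (hbinij : ∀ N, ∀ k : ℕ, volume {ω | Kij N ω = k} =
      ENNReal.ofReal ((N.choose k : ℝ) * (p * q) ^ k * (1 - p * q) ^ (N - k)))
    (hbini : ∀ N, ∀ k : ℕ, volume {ω | Ki N ω = k} =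
      ENNReal.ofReal ((N.choose k : ℝ) * p ^ k * (1 - p) ^ (N - k)))
    (hord : ∀ N ω, Kij N ω ≤ Ki N ω ∧ Ki N ω ≤ N) :
    Tendsto (fun N : ℕ =>
        (∫ ω, Real.log (((max (Kij N ω) 1 : ℕ) : ℝ) / N)) -
        ∫ ω, Real.log (((max (Ki N ω) 1 : ℕ) : ℝ) / N))
      atTop (nhds (Real.log q)) := by
  have hpq0 : 0 < p * q := mul_pos hp hq
  have hpq1 : p * q ≤ 1 := le_trans (by nlinarith) hp1
  have h1 : Tendsto (fun N : ℕ => ∫ ω, Real.log (((max (Kij N ω) 1 : ℕ) : ℝ) / N)) atTop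
      (nhds (Real.log (p * q))) :=
    tendsto_integral_log hpq0 hpq1 Kij hmeasij (fun N k => hbinij N k)
      (fun N ω => le_trans (hord N ω).1 (hord N ω).2)
  have h2 : Tendsto (fun N : ℕ => ∫ ω, Real.log (((max (Ki N ω) 1 : ℕ) : ℝ) / N)) atTop
      (nhds (Real.log p)) :=
    tendsto_integral_log hp hp1 Ki hmeasi (fun N k => hbini N k) (fun N ω => (hord N ω).2)
  have := h1.sub h2
  rw [Real.log_mul (ne_of_gt hp) (ne_of_gt hq)] at this
  simpa using this
end
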